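/- Under the separability assumption of the previous statement, the estimator r̂_L = (m+1)/(k(m−1)) · (d̄ − d̂) is non-negative for all m ≥ 2 and all data. -/
import Mathlib


/-- under the separability assumption, the estimator
`r̂_L = (m+1)/(k(m−1)) · (d̄ − d̂)` is non-negative for all `m ≥ 2`. -/
theorem stmt3 {Θ H : Type*} (m k : ℕ) (hm : 2 ≤ m) (hk : 1 ≤ k)
    (Ldag : Fin m → Θ → ℝ) (Lddag : Fin m → H → ℝ)
    (L : Fin m → Θ → H → ℝ)
    (hsep : ∀ ℓ θ η, L ℓ θ η = Ldag ℓ θ + Lddag ℓ η)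
    (θ₀ : Θ)
    (θhat : Fin m → Θ) (ηhat : Fin m → H)
    (hθhat : ∀ ℓ θ, Ldag ℓ θ ≤ Ldag ℓ (θhat ℓ))
    (hηhat : ∀ ℓ η, Lddag ℓ η ≤ Lddag ℓ (ηhat ℓ))
    (θs : Θ) (ηs : H)
    (hθs : ∀ θ, (1 / (m : ℝ)) * ∑ ℓ, Ldag ℓ θ ≤ (1 / (m : ℝ)) * ∑ ℓ, Ldag ℓ θs)
    (hηs : ∀ η, (1 / (m : ℝ)) * ∑ ℓ, Lddag ℓ η ≤ (1 / (m : ℝ)) * ∑ ℓ, Lddag ℓ ηs)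
    (dbar dhat rhat : ℝ)
    (hdbar : dbar = (2 / (m : ℝ)) * ∑ ℓ, (L ℓ (θhat ℓ) (ηhat ℓ) - L ℓ θ₀ (ηhat ℓ)))
    (hdhat : dhat = (2 / (m : ℝ)) * ∑ ℓ, (L ℓ θs ηs - L ℓ θ₀ ηs))
    (hrhat : rhat = ((m : ℝ) + 1) / ((k : ℝ) * ((m : ℝ) - 1)) * (dbar - dhat)) :
    0 ≤ rhat := by
  have hmpos : (0:ℝ) < m := by positivity
  have hsum : ∑ ℓ, Ldag ℓ θs ≤ ∑ ℓ, Ldag ℓ (θhat ℓ) :=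
    Finset.sum_le_sum fun ℓ _ => hθhat ℓ θs
  have hdiff : 0 ≤ dbar - dhat := by
    simp only [hdbar, hdhat, hsep, add_sub_add_right_eq_sub]
    rw [← mul_sub, ← Finset.sum_sub_distrib]
    have : (0:ℝ) ≤ ∑ ℓ, (Ldag ℓ (θhat ℓ) - Ldag ℓ θ₀ - (Ldag ℓ θs - Ldag ℓ θ₀)) := by
      have := sub_nonneg.mpr hsum
      rw [← Finset.sum_sub_distrib] at this
      convert this using 2 with ℓ
      ring
    positivity
  rw [hrhat]
  have hco : (0:ℝ) ≤ ((m:ℝ)+1)/((k:ℝ)*((m:ℝ)-1)) := by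
    apply div_nonneg (by linarith)
    have hk' : (1:ℝ) ≤ k := by exact_mod_cast hk
    have hm' : (2:ℝ) ≤ m := by exact_mod_cast hm
    nlinarith
  exact mul_nonneg hco hdiff
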